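/- arXiv:2105.08478 — 5 statements merged into one kernel-verified Lean document; each statement's English description precedes it below -/
import Mathlib

section
/- For every real C ≥ 2 and every real x ≥ sqrt(2/C), e^{-C x} / (1 - e^{-x}) ≤ e^{-C x / 4}. -/
/-!
Multiplying out, the claim is `exp (-(3/4) C x) ≤ 1 - exp (-x)`. Both sides are compared with
`x / (1 + x)` using `1 + t ≤ exp t`: on the right at `t = x`, on the left at `t = (3/4) C x`, which
is at least `1 / x` because `C x² ≥ 2`.
-/

open Real

lemma div_one_add_le_one_sub_exp_neg {x : ℝ} (hx : 0 ≤ x) : x / (1 + x) ≤ 1 - exp (-x) := by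
  have hexp : exp (-x) ≤ (1 + x)⁻¹ := by
    rw [exp_neg]
    exact inv_anti₀ (by positivity) (by linarith [add_one_le_exp x])
  have hsplit : x / (1 + x) = 1 - (1 + x)⁻¹ := by field_simp; ring
  linarith

lemma exp_neg_le_one_sub_exp_neg {x y : ℝ} (hx : 0 < x) (hxy : 1 ≤ x * y) :
    exp (-y) ≤ 1 - exp (-x) := by
  have hy : x⁻¹ ≤ y := by rwa [inv_le_iff_one_le_mul₀' hx]
  calc exp (-y) = (exp y)⁻¹ := exp_neg y
    _ ≤ (1 + x⁻¹)⁻¹ := inv_anti₀ (by positivity) (by linarith [add_one_le_exp y])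
    _ = x / (1 + x) := by field_simp; ring
    _ ≤ 1 - exp (-x) := div_one_add_le_one_sub_exp_neg hx.le

theorem exp_div_one_sub_exp_le (C x : ℝ) (hC : 2 ≤ C) (hx : Real.sqrt (2 / C) ≤ x) :
    Real.exp (-C * x) / (1 - Real.exp (-x)) ≤ Real.exp (-C * x / 4) := by
  have hC₀ : 0 < C := by linarith
  have hx₀ : 0 < x := (sqrt_pos.2 (by positivity)).trans_le hx
  have hCx : 2 ≤ C * x ^ 2 := by
    rw [← div_le_iff₀' hC₀]
    exact (sqrt_le_left hx₀.le).1 hx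
  have key : exp (-(3 * C * x / 4)) ≤ 1 - exp (-x) :=
    exp_neg_le_one_sub_exp_neg hx₀ (by nlinarith)
  rw [div_le_iff₀ ((exp_pos _).trans_le key)]
  calc exp (-C * x) = exp (-C * x / 4) * exp (-(3 * C * x / 4)) := by
        rw [← exp_add]; ring_nf
    _ ≤ exp (-C * x / 4) * (1 - exp (-x)) := by gcongr
end

section
/- For every natural number n ≥ 1 and every x ∈ [0,1], the sum over k from 1 to n-1 of binom(n,k) * x^{k(n-k)} is at most 2((1 + x^{n/2})^n - 1), which in turn is at most 2 n x^{n/2} e^{n x^{n/2}}. -/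
/-!
Put `y = x ^ (n / 2)`. Since `k (n - k) ≥ (n / 2) · min k (n - k)` and `x ≤ 1`, each term obeys
`x ^ (k (n - k)) ≤ y ^ k + y ^ (n - k)`; by the symmetry `k ↦ n - k` of the binomial
coefficients both halves sum to the same part of the binomial expansion of `(1 + y) ^ n`.
The second inequality is `(1 + y) ^ n ≤ exp (n y)` together with `exp t - 1 ≤ t exp t`.
-/

open Finset Real

theorem sum_Ico_choose_mul_pow_sub {R : Type*} [CommSemiring R] (n : ℕ) (y : R) :
    ∑ k ∈ Ico 1 n, (n.choose k : R) * y ^ (n - k) = ∑ k ∈ Ico 1 n, (n.choose k : R) * y ^ k := by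
  have hsymm : ∀ k ∈ Ico 1 n,
      (n.choose k : R) * y ^ (n - k) = (n.choose (n - k) : R) * y ^ (n - k) := fun k hk ↦ by
    rw [Nat.choose_symm (mem_Ico.1 hk).2.le]
  rw [sum_congr rfl hsymm, sum_Ico_reflect (fun j ↦ (n.choose j : R) * y ^ j) 1 n.le_succ]
  simp

section BinomialSums

variable {R : Type*} [CommRing R] [PartialOrder R] [IsOrderedRing R]

theorem sum_Ico_choose_mul_pow_le (n : ℕ) {y : R} (hy : 0 ≤ y) :
    ∑ k ∈ Ico 1 n, (n.choose k : R) * y ^ k ≤ (1 + y) ^ n - 1 := by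
  have hexpand : (1 + y) ^ n - 1 = ∑ k ∈ Ico 1 (n + 1), (n.choose k : R) * y ^ k := by
    rw [add_comm, add_pow, range_eq_Ico, sum_eq_sum_Ico_succ_bot n.succ_pos]
    simp [mul_comm]
  rw [hexpand]
  exact sum_le_sum_of_subset_of_nonneg (Ico_subset_Ico_right n.le_succ)
    fun k _ _ ↦ by positivity

theorem sum_Ico_choose_mul_pow_add_pow_sub_le (n : ℕ) {y : R} (hy : 0 ≤ y) :
    ∑ k ∈ Ico 1 n, (n.choose k : R) * (y ^ k + y ^ (n - k)) ≤ 2 * ((1 + y) ^ n - 1) := by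
  have h := sum_Ico_choose_mul_pow_le n hy
  simp only [mul_add, sum_add_distrib, sum_Ico_choose_mul_pow_sub, two_mul]
  exact add_le_add h h

end BinomialSums

section PowerBounds

variable {x : ℝ}

theorem pow_le_rpow_half_pow (hx0 : 0 ≤ x) (hx1 : x ≤ 1) {n k m : ℕ} (h : n * k ≤ 2 * m) :
    x ^ m ≤ (x ^ ((n : ℝ) / 2)) ^ k := by
  have hexp : (n : ℝ) / 2 * k ≤ m := by
    have : ((n * k : ℕ) : ℝ) ≤ ((2 * m : ℕ) : ℝ) := by exact_mod_cast h
    push_cast at this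
    linarith
  rw [← rpow_mul_natCast hx0, ← rpow_natCast x m]
  exact rpow_le_rpow_of_exponent_ge' hx0 hx1 (by positivity) hexp

theorem pow_mul_sub_le_rpow_half_pow_add (hx0 : 0 ≤ x) (hx1 : x ≤ 1) (n k : ℕ) :
    x ^ (k * (n - k)) ≤ (x ^ ((n : ℝ) / 2)) ^ k + (x ^ ((n : ℝ) / 2)) ^ (n - k) := by
  have hy : 0 ≤ x ^ ((n : ℝ) / 2) := rpow_nonneg hx0 _
  rcases le_total (2 * k) n with hk | hk
  · have : n * k ≤ 2 * (k * (n - k)) := by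
      calc n * k ≤ 2 * (n - k) * k := Nat.mul_le_mul_right k (by omega)
        _ = 2 * (k * (n - k)) := by ring
    linarith [pow_le_rpow_half_pow hx0 hx1 this, pow_nonneg hy (n - k)]
  · have : n * (n - k) ≤ 2 * (k * (n - k)) := by
      calc n * (n - k) ≤ 2 * k * (n - k) := Nat.mul_le_mul_right (n - k) hk
        _ = 2 * (k * (n - k)) := by ring
    linarith [pow_le_rpow_half_pow hx0 hx1 this, pow_nonneg hy k]

end PowerBounds

theorem exp_sub_one_le_mul_exp (t : ℝ) : exp t - 1 ≤ t * exp t := by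
  have h : (1 - t) * exp t ≤ 1 :=
    calc (1 - t) * exp t ≤ exp (-t) * exp t := by gcongr; exact one_sub_le_exp_neg t
      _ = 1 := by rw [← exp_add, neg_add_cancel, exp_zero]
  linarith

theorem one_add_pow_sub_one_le_mul_exp (n : ℕ) {y : ℝ} (hy : 0 ≤ y) :
    (1 + y) ^ n - 1 ≤ n * y * exp (n * y) := by
  have hpow : (1 + y) ^ n ≤ exp (n * y) := by
    rw [exp_nat_mul]
    exact pow_le_pow_left₀ (by linarith) (by linarith [add_one_le_exp y]) n
  linarith [exp_sub_one_le_mul_exp (n * y)]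

theorem binomial_sum_bound_general (n : ℕ) (x : ℝ) (hx0 : 0 ≤ x) (hx1 : x ≤ 1) :
    (∑ k ∈ Finset.Ico 1 n, (n.choose k : ℝ) * x ^ (k * (n - k)))
      ≤ 2 * ((1 + x ^ ((n : ℝ) / 2)) ^ n - 1) ∧
    2 * ((1 + x ^ ((n : ℝ) / 2)) ^ n - 1)
      ≤ 2 * n * x ^ ((n : ℝ) / 2) * Real.exp (n * x ^ ((n : ℝ) / 2)) := by
  have hy : 0 ≤ x ^ ((n : ℝ) / 2) := rpow_nonneg hx0 _
  constructor
  · calc (∑ k ∈ Ico 1 n, (n.choose k : ℝ) * x ^ (k * (n - k)))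
        ≤ ∑ k ∈ Ico 1 n, (n.choose k : ℝ) *
            ((x ^ ((n : ℝ) / 2)) ^ k + (x ^ ((n : ℝ) / 2)) ^ (n - k)) :=
          sum_le_sum fun k _ ↦ mul_le_mul_of_nonneg_left
            (pow_mul_sub_le_rpow_half_pow_add hx0 hx1 n k) (Nat.cast_nonneg _)
      _ ≤ 2 * ((1 + x ^ ((n : ℝ) / 2)) ^ n - 1) := sum_Ico_choose_mul_pow_add_pow_sub_le n hy
  · linarith [one_add_pow_sub_one_le_mul_exp n hy]

theorem binomial_sum_bound (n : ℕ) (hn : 1 ≤ n) (x : ℝ) (hx0 : 0 ≤ x) (hx1 : x ≤ 1) :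
    (∑ k ∈ Finset.Ico 1 n, (n.choose k : ℝ) * x ^ (k * (n - k)))
      ≤ 2 * ((1 + x ^ ((n : ℝ) / 2)) ^ n - 1) ∧
    2 * ((1 + x ^ ((n : ℝ) / 2)) ^ n - 1)
      ≤ 2 * n * x ^ ((n : ℝ) / 2) * Real.exp (n * x ^ ((n : ℝ) / 2)) :=
  binomial_sum_bound_general n x hx0 hx1
end

section
/- Let p, q ∈ (0,1) and define the Hellinger affinity ρ(p,q) = sqrt(p q) + sqrt((1-p)(1-q)). Then ρ(p,q) ≤ 1 - (1/2)(sqrt p - sqrt q)^2 + p q / 4. -/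
/-!
Factor both square roots. The tangent-line bound `√(1 - x) ≤ 1 - x / 2` (concavity of `√` at `1`)
gives `√((1 - p)(1 - q)) ≤ (1 - p/2)(1 - q/2) = 1 - (p + q)/2 + pq/4`, and
`√p √q - (p + q)/2 = -(√p - √q)²/2`.
-/

open Real

lemma sqrt_one_sub_le {x : ℝ} (hx : x ≤ 2) : √(1 - x) ≤ 1 - x / 2 :=
  (sqrt_le_left (by linarith)).2 (by nlinarith [sq_nonneg x])

lemma sqrt_mul_one_sub_le {p q : ℝ} (hp : p ≤ 1) (hq : q ≤ 1) :
    √((1 - p) * (1 - q)) ≤ (1 - p / 2) * (1 - q / 2) := by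
  rw [sqrt_mul (by linarith)]
  exact mul_le_mul (sqrt_one_sub_le (by linarith)) (sqrt_one_sub_le (by linarith))
    (sqrt_nonneg _) (by linarith)

lemma sqrt_mul_add_mul_one_sub_half {p q : ℝ} (hp : 0 ≤ p) (hq : 0 ≤ q) :
    √(p * q) + (1 - p / 2) * (1 - q / 2) = 1 - (1 / 2) * (√p - √q) ^ 2 + p * q / 4 := by
  rw [sqrt_mul hp]
  linear_combination (1 / 2) * sq_sqrt hp + (1 / 2) * sq_sqrt hq

theorem hellinger_affinity_bound (p q : ℝ) (hp0 : 0 < p) (hp1 : p < 1)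
    (hq0 : 0 < q) (hq1 : q < 1) :
    Real.sqrt (p * q) + Real.sqrt ((1 - p) * (1 - q))
      ≤ 1 - (1 / 2) * (Real.sqrt p - Real.sqrt q) ^ 2 + p * q / 4 := by
  rw [← sqrt_mul_add_mul_one_sub_half hp0.le hq0.le]
  gcongr
  exact sqrt_mul_one_sub_le hp1.le hq1.le
end

section
/- Let p_n = a log n / n and q_n = b log n / n with 0 < q_n ≤ p_n < 1. Then ρ(p_n,q_n)^{n/2} ≤ exp(-(1/4)(sqrt a - sqrt b)^2 log n + (1/(8n)) a b (log n)^2), where ρ(p,q) = sqrt(pq) + sqrt((1-p)(1-q)). -/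
/-!
Since `√((1-p)(1-q)) ≤ 1 - (p+q)/2` by AM-GM, the Hellinger affinity satisfies
`ρ(p,q) ≤ 1 - (√p - √q)²/2 ≤ exp (-(√p - √q)²/2)`. Raising to the power `n/2` and using
`n (√pₙ - √qₙ)² = (√a - √b)² log n` gives the bound even without the nonnegative
`a b (log n)² / (8n)` term.
-/

open Real

noncomputable def hellingerAffinity (p q : ℝ) : ℝ :=
  √(p * q) + √((1 - p) * (1 - q))

namespace hellingerAffinity

variable {p q : ℝ}

lemma nonneg (p q : ℝ) : 0 ≤ hellingerAffinity p q := by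
  unfold hellingerAffinity; positivity

lemma le_one_sub_sq_sub_sqrt (hp : 0 ≤ p) (hq : 0 ≤ q) (hp1 : p ≤ 1) (hq1 : q ≤ 1) :
    hellingerAffinity p q ≤ 1 - (√p - √q) ^ 2 / 2 := by
  have amgm : √((1 - p) * (1 - q)) ≤ 1 - (p + q) / 2 :=
    Real.sqrt_le_iff.2 ⟨by linarith, by nlinarith [sq_nonneg (p - q)]⟩
  have hsp : √p ^ 2 = p := Real.sq_sqrt hp
  have hsq : √q ^ 2 = q := Real.sq_sqrt hq
  rw [hellingerAffinity, Real.sqrt_mul hp]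
  nlinarith

lemma le_exp (hp : 0 ≤ p) (hq : 0 ≤ q) (hp1 : p ≤ 1) (hq1 : q ≤ 1) :
    hellingerAffinity p q ≤ exp (-((√p - √q) ^ 2 / 2)) :=
  (le_one_sub_sq_sub_sqrt hp hq hp1 hq1).trans <| by
    linarith [Real.add_one_le_exp (-((√p - √q) ^ 2 / 2))]

lemma rpow_le_exp (hp : 0 ≤ p) (hq : 0 ≤ q) (hp1 : p ≤ 1) (hq1 : q ≤ 1) {t : ℝ} (ht : 0 ≤ t) :
    hellingerAffinity p q ^ t ≤ exp (-(t * (√p - √q) ^ 2 / 2)) := by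
  calc hellingerAffinity p q ^ t ≤ exp (-((√p - √q) ^ 2 / 2)) ^ t :=
        Real.rpow_le_rpow (nonneg p q) (le_exp hp hq hp1 hq1) ht
    _ = exp (-(t * (√p - √q) ^ 2 / 2)) := by rw [← Real.exp_mul]; ring_nf

end hellingerAffinity

lemma sq_sqrt_mul_sub_sqrt_mul {c : ℝ} (a b : ℝ) (hc : 0 ≤ c) :
    (√(a * c) - √(b * c)) ^ 2 = (√a - √b) ^ 2 * c := by
  rw [Real.sqrt_mul' a hc, Real.sqrt_mul' b hc, ← sub_mul, mul_pow, Real.sq_sqrt hc]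

theorem hellinger_affinity_power_bound_general (n : ℕ) (hn : 2 ≤ n) (a b : ℝ)
    (ha : 0 < a) (hb : 0 < b)
    (hqp : b * Real.log n / n ≤ a * Real.log n / n)
    (hp1 : a * Real.log n / n < 1) :
    (Real.sqrt ((a * Real.log n / n) * (b * Real.log n / n))
      + Real.sqrt ((1 - a * Real.log n / n) * (1 - b * Real.log n / n)))
        ^ ((n : ℝ) / 2)
    ≤ Real.exp (-(1 / 4) * (Real.sqrt a - Real.sqrt b) ^ 2 * Real.log n
        + (1 / (8 * n)) * a * b * (Real.log n) ^ 2) := by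
  have hn0 : (n : ℝ) ≠ 0 := by exact_mod_cast (by omega : n ≠ 0)
  have hL : 0 ≤ Real.log n := Real.log_natCast_nonneg n
  have hq : 0 ≤ b * Real.log n / n := by positivity
  calc hellingerAffinity (a * Real.log n / n) (b * Real.log n / n) ^ ((n : ℝ) / 2)
      ≤ exp (-((n : ℝ) / 2 * (√(a * Real.log n / n) - √(b * Real.log n / n)) ^ 2 / 2)) :=
        hellingerAffinity.rpow_le_exp (hq.trans hqp) hq hp1.le (hqp.trans hp1.le) (by positivity)
    _ = exp (-(1 / 4) * (√a - √b) ^ 2 * Real.log n) := by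
        rw [mul_div_assoc a, mul_div_assoc b, sq_sqrt_mul_sub_sqrt_mul a b (by positivity)]
        field_simp
        norm_num
    _ ≤ _ := exp_le_exp.2 (le_add_of_nonneg_right (by positivity))

theorem hellinger_affinity_power_bound (n : ℕ) (hn : 2 ≤ n) (a b : ℝ)
    (ha : 0 < a) (hb : 0 < b)
    (hq0 : 0 < b * Real.log n / n)
    (hqp : b * Real.log n / n ≤ a * Real.log n / n)
    (hp1 : a * Real.log n / n < 1) :
    (Real.sqrt ((a * Real.log n / n) * (b * Real.log n / n))
      + Real.sqrt ((1 - a * Real.log n / n) * (1 - b * Real.log n / n)))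
        ^ ((n : ℝ) / 2)
    ≤ Real.exp (-(1 / 4) * (Real.sqrt a - Real.sqrt b) ^ 2 * Real.log n
        + (1 / (8 * n)) * a * b * (Real.log n) ^ 2) :=
  hellinger_affinity_power_bound_general n hn a b ha hb hqp hp1
end

section
/- For r ∈ (0,1), n ∈ ℕ, and m1, m2 ∈ {0,...,⌊n/2⌋}, the ratio (r^{m1}(1-r)^{n-m1} + r^{n-m1}(1-r)^{m1}) / (r^{m2}(1-r)^{n-m2} + r^{n-m2}(1-r)^{m2}) is bounded above by 2 * max(r/(1-r), (1-r)/r)^{m2 - m1} and below by (1/2) * max(r/(1-r), (1-r)/r)^{m2 - m1}. -/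
/-!
Write `s = 1 - r` and assume `r ≤ s` (the weight is symmetric in `r` and `s`). For `2 * m ≤ n`
the term `r ^ m * s ^ (n - m)` dominates its mirror image `r ^ (n - m) * s ^ m`, so the weight
`r ^ m * s ^ (n - m) + r ^ (n - m) * s ^ m` lies within a factor `2` of its dominant term. The
dominant terms for `m₁` and `m₂` differ exactly by the factor `(s / r) ^ (m₂ - m₁)`.
-/

lemma pow_sub_mul_pow_le_pow_mul_pow_sub {r s : ℝ} (hr : 0 ≤ r) (hrs : r ≤ s) {n m : ℕ}
    (hm : 2 * m ≤ n) : r ^ (n - m) * s ^ m ≤ r ^ m * s ^ (n - m) := by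
  obtain ⟨k, rfl⟩ : ∃ k, n = 2 * m + k := ⟨n - 2 * m, by omega⟩
  have hk : 2 * m + k - m = m + k := by omega
  have hs : 0 ≤ s := hr.trans hrs
  calc r ^ (2 * m + k - m) * s ^ m = (r ^ m * s ^ m) * r ^ k := by rw [hk]; ring
    _ ≤ (r ^ m * s ^ m) * s ^ k := by gcongr
    _ = r ^ m * s ^ (2 * m + k - m) := by rw [hk]; ring

lemma pow_mul_pow_sub_eq_zpow {r s : ℝ} (hr : r ≠ 0) (hs : s ≠ 0) {n m : ℕ} (hm : m ≤ n) :
    r ^ m * s ^ (n - m) = s ^ n * (s / r) ^ (-(m : ℤ)) := by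
  rw [pow_sub₀ s hs hm, zpow_neg, zpow_natCast, div_pow]
  field_simp

lemma div_two_mul_le_add_div_add {a₁ b₁ a₂ b₂ : ℝ} (ha₁ : 0 ≤ a₁) (hb₁ : 0 ≤ b₁)
    (hb₂ : 0 ≤ b₂) (hba₂ : b₂ ≤ a₂) (ha₂ : 0 < a₂) :
    a₁ / (2 * a₂) ≤ (a₁ + b₁) / (a₂ + b₂) :=
  div_le_div₀ (by positivity) (by linarith) (by positivity) (by linarith)

lemma add_div_add_le_two_mul_div {a₁ b₁ a₂ b₂ : ℝ} (hb₁ : 0 ≤ b₁) (hba₁ : b₁ ≤ a₁)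
    (hb₂ : 0 ≤ b₂) (ha₂ : 0 < a₂) :
    (a₁ + b₁) / (a₂ + b₂) ≤ 2 * a₁ / a₂ :=
  div_le_div₀ (by linarith) (by linarith) ha₂ (by linarith)

def symmWeight (r s : ℝ) (n m : ℕ) : ℝ :=
  r ^ m * s ^ (n - m) + r ^ (n - m) * s ^ m

lemma symmWeight_comm (r s : ℝ) (n m : ℕ) : symmWeight r s n m = symmWeight s r n m := by
  unfold symmWeight
  ring

lemma symmWeight_div_bounds_of_le {r s : ℝ} (hr : 0 < r) (hrs : r ≤ s) {n m₁ m₂ : ℕ}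
    (hm₁ : 2 * m₁ ≤ n) (hm₂ : 2 * m₂ ≤ n) :
    1 / 2 * (s / r) ^ ((m₂ : ℤ) - m₁) ≤ symmWeight r s n m₁ / symmWeight r s n m₂ ∧
      symmWeight r s n m₁ / symmWeight r s n m₂ ≤ 2 * (s / r) ^ ((m₂ : ℤ) - m₁) := by
  have hs : 0 < s := hr.trans_le hrs
  have hdom₁ := pow_sub_mul_pow_le_pow_mul_pow_sub hr.le hrs hm₁
  have hdom₂ := pow_sub_mul_pow_le_pow_mul_pow_sub hr.le hrs hm₂
  have hratio : r ^ m₁ * s ^ (n - m₁) / (r ^ m₂ * s ^ (n - m₂)) = (s / r) ^ ((m₂ : ℤ) - m₁) := by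
    rw [pow_mul_pow_sub_eq_zpow hr.ne' hs.ne' (by omega : m₁ ≤ n),
      pow_mul_pow_sub_eq_zpow hr.ne' hs.ne' (by omega : m₂ ≤ n),
      mul_div_mul_left _ _ (by positivity), ← zpow_sub₀ (by positivity)]
    ring_nf
  unfold symmWeight
  constructor
  · calc 1 / 2 * (s / r) ^ ((m₂ : ℤ) - m₁)
        = r ^ m₁ * s ^ (n - m₁) / (2 * (r ^ m₂ * s ^ (n - m₂))) := by
          rw [← hratio, mul_comm 2, ← div_div]; ring
      _ ≤ _ := div_two_mul_le_add_div_add (by positivity) (by positivity) (by positivity)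
          hdom₂ (by positivity)
  · calc _ ≤ 2 * (r ^ m₁ * s ^ (n - m₁)) / (r ^ m₂ * s ^ (n - m₂)) :=
          add_div_add_le_two_mul_div (by positivity) hdom₁ (by positivity) (by positivity)
      _ = 2 * (s / r) ^ ((m₂ : ℤ) - m₁) := by rw [mul_div_assoc, hratio]

lemma symmWeight_div_bounds {r s : ℝ} (hr : 0 < r) (hs : 0 < s) {n m₁ m₂ : ℕ}
    (hm₁ : 2 * m₁ ≤ n) (hm₂ : 2 * m₂ ≤ n) :
    1 / 2 * max (r / s) (s / r) ^ ((m₂ : ℤ) - m₁) ≤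
        symmWeight r s n m₁ / symmWeight r s n m₂ ∧
      symmWeight r s n m₁ / symmWeight r s n m₂ ≤ 2 * max (r / s) (s / r) ^ ((m₂ : ℤ) - m₁) := by
  rcases le_total r s with hrs | hsr
  · rw [max_eq_right (div_le_div_iff₀ hs hr |>.2 (by nlinarith))]
    exact symmWeight_div_bounds_of_le hr hrs hm₁ hm₂
  · rw [max_eq_left (div_le_div_iff₀ hr hs |>.2 (by nlinarith)), symmWeight_comm r s,
      symmWeight_comm r s]
    exact symmWeight_div_bounds_of_le hs hsr hm₁ hm₂

theorem prior_ratio_bound (r : ℝ) (hr0 : 0 < r) (hr1 : r < 1) (n m1 m2 : ℕ)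
    (hm1 : m1 ≤ n / 2) (hm2 : m2 ≤ n / 2) :
    (1 / 2) * (max (r / (1 - r)) ((1 - r) / r)) ^ ((m2 : ℤ) - (m1 : ℤ))
      ≤ (r ^ m1 * (1 - r) ^ (n - m1) + r ^ (n - m1) * (1 - r) ^ m1) /
        (r ^ m2 * (1 - r) ^ (n - m2) + r ^ (n - m2) * (1 - r) ^ m2) ∧
    (r ^ m1 * (1 - r) ^ (n - m1) + r ^ (n - m1) * (1 - r) ^ m1) /
        (r ^ m2 * (1 - r) ^ (n - m2) + r ^ (n - m2) * (1 - r) ^ m2)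
      ≤ 2 * (max (r / (1 - r)) ((1 - r) / r)) ^ ((m2 : ℤ) - (m1 : ℤ)) :=
  symmWeight_div_bounds hr0 (sub_pos.2 hr1) (by omega) (by omega)
end
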